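/- arXiv:1704.02174 — 2 statements merged into one kernel-verified Lean document; each statement's English description precedes it below -/
import Mathlib

section
/- Let 0 < α < 1 and 0 ≤ μ < 1 with μ ≤ α. If f ∈ C_μ[a,b] (i.e., (x-a)^μ f(x) extends continuously to [a,b]), then I_{a+}^α f extends to a continuous function on [a,b]; in particular I_{a+}^α maps C_μ[a,b] boundedly into C[a,b]. -/
open Real Set MeasureTheory intervalIntegral

/-- Riemann–Liouville fractional integral of order `α > 0` based at `a`. -/
noncomputable def RLint (a α : ℝ) (f : ℝ → ℝ) (x : ℝ) : ℝ :=
  if α = 0 then f x else (1 / Real.Gamma α) * ∫ t in a..x, (x - t) ^ (α - 1) * f t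

/-- `f ∈ C_μ[a,b]`: the weighted function `(x-a)^μ f(x)` on `(a,b]` extends
continuously to `[a,b]`, with extension `F`. -/
def IsWeightedExt (a b μ : ℝ) (f F : ℝ → ℝ) : Prop :=
  ContinuousOn F (Set.Icc a b) ∧ ∀ x ∈ Set.Ioc a b, F x = (x - a) ^ μ * f x

/-!
Substituting `t = a + (x - a) s` turns `I^α f (x)` into
`Γ(α)⁻¹ (x - a)^(α - μ) ∫₀¹ (1 - s)^(α - 1) s^(-μ) F (a + (x - a) s) ds`, where
`F = (· - a)^μ f` is continuous on `[a, b]`. The Beta weight is integrable because `α > 0`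
and `μ < 1`, so by dominated convergence the integral is continuous in `x` and bounded by
`B(α, 1 - μ) · sup |F|`; the prefactor `(x - a)^(α - μ)` is continuous and bounded since
`μ ≤ α`.
-/

open scoped Interval

theorem intervalIntegrable_one_sub_rpow_mul_rpow {p q : ℝ} (hp : -1 < p) (hq : -1 < q) :
    IntervalIntegrable (fun s : ℝ => (1 - s) ^ p * s ^ q) volume 0 1 := by
  have hleft : IntervalIntegrable (fun s : ℝ => (1 - s) ^ p * s ^ q) volume 0 (1 / 2) := by
    refine (intervalIntegrable_rpow' hq).continuousOn_mul
      (ContinuousOn.rpow_const (by fun_prop) fun s hs => Or.inl ?_)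
    rw [uIcc_of_le (by norm_num)] at hs
    linarith [hs.2]
  have hright : IntervalIntegrable (fun s : ℝ => (1 - s) ^ p * s ^ q) volume (1 / 2) 1 := by
    have h := (intervalIntegrable_rpow' (a := 1 / 2) (b := 0) hp).comp_sub_left 1
    norm_num at h
    refine h.mul_continuousOn (ContinuousOn.rpow_const (by fun_prop) fun s hs => Or.inl ?_)
    rw [uIcc_of_le (by norm_num)] at hs
    linarith [hs.1]
  exact hleft.trans hright

theorem add_sub_mul_mem_Icc {a b x s : ℝ} (hx : x ∈ Icc a b) (hs : s ∈ Icc (0 : ℝ) 1) :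
    a + (x - a) * s ∈ Icc a b := by
  constructor <;> nlinarith [hx.1, hx.2, hs.1, hs.2]

theorem continuousOn_integral_mul_comp_affine {k F : ℝ → ℝ} {a b : ℝ}
    (hk : IntervalIntegrable k volume 0 1) (hF : ContinuousOn F (Icc a b)) :
    ContinuousOn (fun x => ∫ s in (0 : ℝ)..1, k s * F (a + (x - a) * s)) (Icc a b) := by
  obtain ⟨M, hM⟩ := isCompact_Icc.exists_bound_of_continuousOn hF
  have hIoc : Ι (0 : ℝ) 1 ⊆ Icc (0 : ℝ) 1 := by
    rw [uIoc_of_le zero_le_one]; exact Ioc_subset_Icc_self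
  intro x₀ hx₀
  refine continuousWithinAt_of_dominated_interval (bound := fun s => ‖k s‖ * M)
    (eventually_nhdsWithin_of_forall fun x hx => ?_)
    (eventually_nhdsWithin_of_forall fun x hx => ae_of_all _ fun s hs => ?_)
    (hk.norm.mul_const M) (ae_of_all _ fun s hs => ?_)
  · refine hk.def'.aestronglyMeasurable.mul
      (ContinuousOn.aestronglyMeasurable ?_ measurableSet_uIoc)
    exact hF.comp (f := fun s => a + (x - a) * s) (by fun_prop)
      fun s hs => add_sub_mul_mem_Icc hx (hIoc hs)
  · rw [norm_mul]
    exact mul_le_mul_of_nonneg_left (hM _ (add_sub_mul_mem_Icc hx (hIoc hs))) (norm_nonneg _)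
  · exact continuousWithinAt_const.mul <| (hF _ (add_sub_mul_mem_Icc hx₀ (hIoc hs))).comp
      (f := fun x => a + (x - a) * s) (by fun_prop : Continuous _).continuousWithinAt
      fun x hx => add_sub_mul_mem_Icc hx (hIoc hs)

theorem abs_integral_mul_comp_affine_le {k F : ℝ → ℝ} {a b x M : ℝ}
    (hk : IntervalIntegrable k volume 0 1) (hk0 : ∀ s ∈ Icc (0 : ℝ) 1, 0 ≤ k s)
    (hF : ∀ y ∈ Icc a b, |F y| ≤ M) (hx : x ∈ Icc a b) :
    |∫ s in (0 : ℝ)..1, k s * F (a + (x - a) * s)| ≤ (∫ s in (0 : ℝ)..1, k s) * M := by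
  rw [← intervalIntegral.integral_mul_const, ← Real.norm_eq_abs]
  refine intervalIntegral.norm_integral_le_of_norm_le zero_le_one
    (ae_of_all _ fun s hs => ?_) (hk.mul_const M)
  rw [Real.norm_eq_abs, abs_mul, abs_of_nonneg (hk0 s (Ioc_subset_Icc_self hs))]
  exact mul_le_mul_of_nonneg_left (hF _ (add_sub_mul_mem_Icc hx (Ioc_subset_Icc_self hs)))
    (hk0 s (Ioc_subset_Icc_self hs))

theorem integral_sub_rpow_mul_sub_rpow_mul {a x p q : ℝ} (F : ℝ → ℝ) (hax : a < x) :
    ∫ t in a..x, (x - t) ^ p * ((t - a) ^ q * F t) =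
      (x - a) ^ (p + q + 1) * ∫ s in (0 : ℝ)..1, (1 - s) ^ p * s ^ q * F (a + (x - a) * s) := by
  have hxa : 0 < x - a := sub_pos.mpr hax
  have hsub := intervalIntegral.smul_integral_comp_mul_add (a := (0 : ℝ)) (b := 1)
    (fun t => (x - t) ^ p * ((t - a) ^ q * F t)) (x - a) a
  rw [mul_zero, zero_add, mul_one, sub_add_cancel, smul_eq_mul] at hsub
  rw [← hsub, Real.rpow_add hxa, Real.rpow_add hxa, Real.rpow_one,
    ← intervalIntegral.integral_const_mul, ← intervalIntegral.integral_const_mul]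
  refine intervalIntegral.integral_congr fun s hs => ?_
  rw [uIcc_of_le zero_le_one] at hs
  have h1 : x - ((x - a) * s + a) = (x - a) * (1 - s) := by ring
  have h2 : (x - a) * s + a - a = (x - a) * s := by ring
  rw [h1, h2, add_comm _ a, Real.mul_rpow hxa.le (sub_nonneg.mpr hs.2),
    Real.mul_rpow hxa.le hs.1]
  ring

theorem RLint_eq_rpow_mul_integral {a b α μ x : ℝ} {f F : ℝ → ℝ} (hα : α ≠ 0)
    (hfF : ∀ y ∈ Ioc a b, F y = (y - a) ^ μ * f y) (hx : x ∈ Ioc a b) :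
    RLint a α f x = 1 / Gamma α * ((x - a) ^ (α - μ) *
      ∫ s in (0 : ℝ)..1, (1 - s) ^ (α - 1) * s ^ (-μ) * F (a + (x - a) * s)) := by
  have hf : ∀ t ∈ Ι a x, f t = (t - a) ^ (-μ) * F t := fun t ht => by
    rw [uIoc_of_le hx.1.le] at ht
    rw [hfF t ⟨ht.1, ht.2.trans hx.2⟩, ← mul_assoc, ← Real.rpow_add (sub_pos.mpr ht.1),
      neg_add_cancel, Real.rpow_zero, one_mul]
  have hint : ∫ t in a..x, (x - t) ^ (α - 1) * f t =
      ∫ t in a..x, (x - t) ^ (α - 1) * ((t - a) ^ (-μ) * F t) :=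
    intervalIntegral.integral_congr_ae (ae_of_all _ fun t ht => by rw [hf t ht])
  rw [RLint, if_neg hα, hint, integral_sub_rpow_mul_sub_rpow_mul F hx.1,
    show α - 1 + -μ + 1 = α - μ by ring]

theorem rl_integral_maps_Cmu_into_C_general (a b α μ : ℝ) (hab : a < b)
    (hα0 : 0 < α) (hμ1 : μ < 1) (hμα : μ ≤ α) :
    ∃ C > 0, ∀ (f F : ℝ → ℝ), IsWeightedExt a b μ f F →
      ∃ g : ℝ → ℝ, ContinuousOn g (Set.Icc a b) ∧
        (∀ x ∈ Set.Ioc a b, g x = RLint a α f x) ∧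
        ∀ x ∈ Set.Icc a b, |g x| ≤ C * sSup ((fun y => |F y|) '' Set.Icc a b) := by
  set k : ℝ → ℝ := fun s => (1 - s) ^ (α - 1) * s ^ (-μ)
  have hk : IntervalIntegrable k volume 0 1 :=
    intervalIntegrable_one_sub_rpow_mul_rpow (by linarith) (by linarith)
  have hk0 : ∀ s ∈ Icc (0 : ℝ) 1, 0 ≤ k s := fun s hs =>
    mul_nonneg (rpow_nonneg (sub_nonneg.mpr hs.2) _) (rpow_nonneg hs.1 _)
  set B := ∫ s in (0 : ℝ)..1, k s
  have hB : 0 ≤ B := intervalIntegral.integral_nonneg zero_le_one hk0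
  have hΓ : 0 < 1 / Gamma α := one_div_pos.mpr (Gamma_pos_of_pos hα0)
  have hba : 0 ≤ (b - a) ^ (α - μ) := rpow_nonneg (sub_nonneg.mpr hab.le) _
  refine ⟨1 / Gamma α * (b - a) ^ (α - μ) * B + 1, by positivity, fun f F hF => ?_⟩
  set M := sSup ((fun y => |F y|) '' Icc a b)
  have hM : ∀ y ∈ Icc a b, |F y| ≤ M := fun y hy =>
    le_csSup (isCompact_Icc.image_of_continuousOn hF.1.abs).bddAbove (mem_image_of_mem _ hy)
  set G := fun x => ∫ s in (0 : ℝ)..1, k s * F (a + (x - a) * s)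
  refine ⟨fun x => 1 / Gamma α * ((x - a) ^ (α - μ) * G x), ?_,
    fun x hx => (RLint_eq_rpow_mul_integral hα0.ne' hF.2 hx).symm, fun x hx => ?_⟩
  · have hpow : Continuous fun x => (x - a) ^ (α - μ) :=
      (continuous_id.sub continuous_const).rpow_const fun _ => Or.inr (by linarith)
    exact continuousOn_const.mul
      (hpow.continuousOn.mul (continuousOn_integral_mul_comp_affine hk hF.1))
  · have hxa : 0 ≤ x - a := sub_nonneg.mpr hx.1
    have hG : |G x| ≤ B * M := abs_integral_mul_comp_affine_le hk hk0 hM hx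
    have hpow : (x - a) ^ (α - μ) ≤ (b - a) ^ (α - μ) :=
      rpow_le_rpow hxa (by linarith [hx.2]) (by linarith)
    have hM0 : 0 ≤ M := (abs_nonneg _).trans (hM x hx)
    rw [abs_mul, abs_mul, abs_of_pos hΓ, abs_of_nonneg (rpow_nonneg hxa _)]
    calc 1 / Gamma α * ((x - a) ^ (α - μ) * |G x|)
        ≤ 1 / Gamma α * ((b - a) ^ (α - μ) * (B * M)) := by gcongr
      _ = 1 / Gamma α * (b - a) ^ (α - μ) * B * M := by ring
      _ ≤ (1 / Gamma α * (b - a) ^ (α - μ) * B + 1) * M := by gcongr; linarith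

theorem rl_integral_maps_Cmu_into_C (a b α μ : ℝ) (hab : a < b)
    (hα0 : 0 < α) (hα1 : α < 1) (hμ0 : 0 ≤ μ) (hμ1 : μ < 1) (hμα : μ ≤ α) :
    ∃ C > 0, ∀ (f F : ℝ → ℝ), IsWeightedExt a b μ f F →
      ∃ g : ℝ → ℝ, ContinuousOn g (Set.Icc a b) ∧
        (∀ x ∈ Set.Ioc a b, g x = RLint a α f x) ∧
        ∀ x ∈ Set.Icc a b, |g x| ≤ C * sSup ((fun y => |F y|) '' Set.Icc a b) :=
  rl_integral_maps_Cmu_into_C_general a b α μ hab hα0 hμ1 hμα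
end

section
/- (Generalized Gronwall, constant case) Suppose β > 0, C ≥ 0, g ≥ 0 constants, and u is nonnegative, locally integrable on [0,T) with u(t) ≤ C + g ∫_0^t (t-s)^{β-1} u(s) ds for all t ∈ [0,T). Then u(t) ≤ C · E_β(g Γ(β) t^β) for all t ∈ [0,T), where E_β(z) = Σ_{k=0}^∞ z^k / Γ(kβ + 1) is the Mittag-Leffler function. -/
open Real Set MeasureTheory intervalIntegral

/-- One-parameter Mittag-Leffler function `E_β(z) = Σ_{k≥0} z^k / Γ(kβ+1)`. -/
noncomputable def mittagLeffler (β z : ℝ) : ℝ :=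
  ∑' k : ℕ, z ^ k / Real.Gamma (k * β + 1)

/-!
Write `U = max u 0` as an `ℝ≥0∞`-valued function and use the Riemann–Liouville integrals
`J^c U (t) = ∫₀ᵗ (t - s)^(c-1) / Γ(c) · U(s) ds`, for which Tonelli holds with no
integrability side conditions. The hypothesis becomes `U ≤ C + gΓ(β) J^β U` on `(0, t]`.
The Beta integral gives `J^a J^b = J^(a+b)` and `J^c 1 = t^c / Γ(c+1)`, so iterating `n` times
yields `U(t) ≤ C Σ_{k≤n} (gΓ(β)t^β)^k / Γ(kβ+1) + (gΓ(β))^(n+1) J^((n+1)β) U (t)`.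
Once `(n+1)β ≥ 1` the remainder is at most `(gΓ(β)t^β)^(n+1) / Γ((n+1)β) · t⁻¹ ∫₀ᵗ U`,
which tends to `0` because the Mittag-Leffler series converges for every argument.
-/

open Filter Topology
open scoped ENNReal Nat

theorem Summable.comp_nat_div {f : ℕ → ℝ} (hf : Summable f) {m : ℕ} (hm : 0 < m) :
    Summable fun k => f (k / m) := by
  have : NeZero m := ⟨hm.ne'⟩
  have hprod : Summable fun p : ℕ × Fin m => f p.1 * 1 :=
    summable_mul_of_summable_norm (g := fun _ : Fin m => (1 : ℝ)) hf.norm .of_finite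
  exact (Nat.divModEquiv m).summable_iff.2 (by simpa using hprod)

theorem Nat.factorial_le_Gamma {n : ℕ} {x : ℝ} (hn : 1 ≤ n) (hx : n + 1 ≤ x) :
    (n ! : ℝ) ≤ Gamma x := by
  have h2 : (2 : ℝ) ≤ n + 1 := by norm_cast; omega
  rw [← Gamma_nat_eq_factorial]
  exact Gamma_strictMonoOn_Ici.monotoneOn h2 (h2.trans hx) hx

theorem ofReal_integral_le_lintegral_ofReal {α : Type*} [MeasurableSpace α] {μ : Measure α}
    (f : α → ℝ) : ENNReal.ofReal (∫ x, f x ∂μ) ≤ ∫⁻ x, ENNReal.ofReal (f x) ∂μ := by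
  by_cases hf : Integrable f μ
  · rw [integral_eq_lintegral_pos_part_sub_lintegral_neg_part hf]
    exact ENNReal.ofReal_le_of_le_toReal (sub_le_self _ ENNReal.toReal_nonneg)
  · simp [integral_undef hf]

theorem summable_pow_div_Gamma_mul_add {β : ℝ} (hβ : 0 < β) (y c : ℝ) :
    Summable fun k : ℕ => y ^ k / Gamma (k * β + c) := by
  obtain ⟨m, hm⟩ := exists_nat_ge (2 / β)
  have hmβ : 2 ≤ m * β := (div_le_iff₀ hβ).1 hm
  have hm0 : 0 < m := Nat.pos_of_ne_zero (by rintro rfl; norm_num at hmβ)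
  set M := max 1 |y|
  -- a block of `m` consecutive terms is dominated by one term of the exponential series
  have hw : Summable fun k : ℕ => M ^ m * (M ^ m) ^ (k / m) / (k / m)! := by
    simpa only [mul_div_assoc] using
      ((Real.summable_pow_div_factorial (M ^ m)).mul_left (M ^ m)).comp_nat_div hm0
  refine hw.of_norm_bounded_eventually_nat ?_
  have hlarge : Tendsto (fun k : ℕ => (k : ℝ) * β) atTop atTop :=
    tendsto_natCast_atTop_atTop.atTop_mul_const hβ
  filter_upwards [eventually_ge_atTop m, hlarge.eventually_ge_atTop (2 * (1 - c))] with k hkm hkβ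
  have hq : 1 ≤ k / m := (Nat.one_le_div_iff hm0).2 hkm
  have hqk : (↑(k / m) : ℝ) + 1 ≤ k * β + c := by
    have : (↑(k / m) : ℝ) * 2 ≤ k * β := by
      calc (↑(k / m) : ℝ) * 2 ≤ ↑(k / m) * (m * β) := by gcongr
        _ = ↑(k / m * m) * β := by push_cast; ring
        _ ≤ k * β := by gcongr; exact_mod_cast Nat.div_mul_le_self k m
    linarith
  have hfact := Nat.factorial_le_Gamma hq hqk
  have hpow : |y| ^ k ≤ M ^ m * (M ^ m) ^ (k / m) := by
    calc |y| ^ k ≤ M ^ k := by gcongr; exact le_max_right _ _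
      _ ≤ M ^ (m * (k / m + 1)) :=
          pow_le_pow_right₀ (le_max_left _ _) (Nat.lt_mul_div_succ k hm0).le
      _ = M ^ m * (M ^ m) ^ (k / m) := by rw [← pow_mul, ← pow_add]; ring_nf
  have hfact_pos : (0 : ℝ) < (k / m)! := by positivity
  rw [norm_div, norm_pow, Real.norm_eq_abs, Real.norm_of_nonneg (hfact_pos.trans_le hfact).le]
  exact div_le_div₀ (by positivity) hpow hfact_pos hfact

theorem mittagLeffler_zero (β : ℝ) : mittagLeffler β 0 = 1 := by
  rw [mittagLeffler, tsum_eq_single 0 fun k hk => by simp [zero_pow hk]]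
  simp

theorem mittagLeffler_nonneg {β x : ℝ} (hβ : 0 ≤ β) (hx : 0 ≤ x) : 0 ≤ mittagLeffler β x :=
  tsum_nonneg fun k => div_nonneg (pow_nonneg hx k) (Gamma_pos_of_pos (by positivity)).le

theorem lintegral_rpow_mul_one_sub_rpow {a b : ℝ} (ha : 0 < a) (hb : 0 < b) :
    ∫⁻ x in Ioo 0 1, ENNReal.ofReal (x ^ (a - 1) * (1 - x) ^ (b - 1)) =
      ENNReal.ofReal (Gamma a * Gamma b / Gamma (a + b)) := by
  have hB := ProbabilityTheory.beta_pos ha hb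
  have h := ProbabilityTheory.lintegral_betaPDF_eq_one ha hb
  simp_rw [ProbabilityTheory.lintegral_betaPDF, mul_assoc,
    ENNReal.ofReal_mul (one_div_pos.2 hB).le] at h
  rw [lintegral_const_mul' _ _ ENNReal.ofReal_ne_top, mul_comm] at h
  rw [ENNReal.eq_inv_of_mul_eq_one_left h, ← ENNReal.ofReal_inv_of_pos (one_div_pos.2 hB),
    one_div, inv_inv, ProbabilityTheory.beta]

/-- The Riemann–Liouville kernel of order `c`. -/
noncomputable def rlKernel (c : ℝ) : ℝ → ℝ≥0∞ :=
  (Ioi 0).indicator fun x => ENNReal.ofReal (x ^ (c - 1) / Gamma c)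

/-- The Riemann–Liouville integral of order `c` with base point `0`. -/
noncomputable def rlIntegral (c : ℝ) (f : ℝ → ℝ≥0∞) (t : ℝ) : ℝ≥0∞ :=
  ∫⁻ s in Ioc 0 t, rlKernel c (t - s) * f s

theorem rlKernel_of_pos {c x : ℝ} (hx : 0 < x) :
    rlKernel c x = ENNReal.ofReal (x ^ (c - 1) / Gamma c) :=
  indicator_of_mem (mem_Ioi.2 hx) _

theorem rlKernel_of_nonpos {c x : ℝ} (hx : x ≤ 0) : rlKernel c x = 0 :=
  indicator_of_notMem (notMem_Ioi.2 hx) _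

theorem rlKernel_one {x : ℝ} (hx : 0 < x) : rlKernel 1 x = 1 := by
  simp [rlKernel_of_pos hx]

theorem rlKernel_ne_top (c x : ℝ) : rlKernel c x ≠ ∞ := by
  rcases le_or_gt x 0 with hx | hx
  · simp [rlKernel_of_nonpos hx]
  · simp [rlKernel_of_pos hx]

@[fun_prop]
theorem measurable_rlKernel (c : ℝ) : Measurable (rlKernel c) :=
  (by fun_prop : Measurable fun x : ℝ => ENNReal.ofReal (x ^ (c - 1) / Gamma c)).indicator
    measurableSet_Ioi

theorem rlKernel_mono {c : ℝ} (hc : 1 ≤ c) : Monotone (rlKernel c) := by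
  intro x y hxy
  rcases le_or_gt x 0 with hx | hx
  · simp [rlKernel_of_nonpos hx]
  rw [rlKernel_of_pos hx, rlKernel_of_pos (hx.trans_le hxy)]
  gcongr

theorem support_rlKernel_mul_rlKernel (a b r t : ℝ) :
    Function.support (fun s => rlKernel a (t - s) * rlKernel b (s - r)) ⊆ Ioo r t := by
  intro s hs
  rw [Function.mem_support, mul_ne_zero_iff] at hs
  have h1 := mem_Ioi.1 (mem_of_indicator_ne_zero hs.1)
  have h2 := mem_Ioi.1 (mem_of_indicator_ne_zero hs.2)
  exact ⟨by linarith, by linarith⟩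

/-- The substitution `s = r + (t - r) x` turns this into the Beta integral. -/
theorem lintegral_rlKernel_mul_rlKernel {a b : ℝ} (ha : 0 < a) (hb : 0 < b) (r t : ℝ) :
    ∫⁻ s, rlKernel a (t - s) * rlKernel b (s - r) = rlKernel (a + b) (t - r) := by
  rw [← setLIntegral_eq_of_support_subset (support_rlKernel_mul_rlKernel a b r t)]
  rcases le_or_gt t r with htr | hrt
  · simp [Ioo_eq_empty_of_le htr, rlKernel_of_nonpos (sub_nonpos.2 htr)]
  set d := t - r with hd
  have hd0 : 0 < d := sub_pos.2 hrt
  have himage : (fun x => d * x + r) '' Ioo 0 1 = Ioo r t := by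
    rw [image_affine_Ioo hd0]; simp [hd]
  have hderiv (x : ℝ) (_ : x ∈ Ioo (0 : ℝ) 1) :
      HasDerivWithinAt (fun x => d * x + r) d (Ioo 0 1) x := by
    simpa using ((hasDerivAt_id x).const_mul d |>.add_const r).hasDerivWithinAt
  rw [← himage, lintegral_image_eq_lintegral_abs_deriv_mul measurableSet_Ioo hderiv
    fun x _ y _ h => by simpa [hd0.ne'] using h]
  have hΓa := Gamma_pos_of_pos ha
  have hΓb := Gamma_pos_of_pos hb
  calc ∫⁻ x in Ioo 0 1,
        ENNReal.ofReal |d| * (rlKernel a (t - (d * x + r)) * rlKernel b (d * x + r - r))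
      = ∫⁻ x in Ioo 0 1, ENNReal.ofReal (d ^ (a + b - 1) / (Gamma a * Gamma b)) *
          ENNReal.ofReal (x ^ (b - 1) * (1 - x) ^ (a - 1)) := by
        refine setLIntegral_congr_fun measurableSet_Ioo fun x ⟨hx0, hx1⟩ => ?_
        have h1x : 0 < 1 - x := sub_pos.2 hx1
        rw [show t - (d * x + r) = d * (1 - x) by rw [hd]; ring, add_sub_cancel_right,
          rlKernel_of_pos (by positivity), rlKernel_of_pos (by positivity), abs_of_pos hd0,
          ← ENNReal.ofReal_mul (by positivity), ← ENNReal.ofReal_mul hd0.le,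
          ← ENNReal.ofReal_mul (by positivity)]
        congr 1
        rw [mul_rpow hd0.le h1x.le, mul_rpow hd0.le hx0.le,
          show a + b - 1 = 1 + (a - 1) + (b - 1) by ring, rpow_add hd0, rpow_add hd0, rpow_one]
        field_simp
    _ = ENNReal.ofReal (d ^ (a + b - 1) / (Gamma a * Gamma b)) *
          ENNReal.ofReal (Gamma b * Gamma a / Gamma (b + a)) := by
        rw [lintegral_const_mul' _ _ ENNReal.ofReal_ne_top,
          lintegral_rpow_mul_one_sub_rpow hb ha]
    _ = rlKernel (a + b) d := by
        rw [rlKernel_of_pos hd0, ← ENNReal.ofReal_mul (by positivity), add_comm b a]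
        congr 1
        field_simp

theorem setLIntegral_rlKernel_mul_rlKernel {a b r : ℝ} (ha : 0 < a) (hb : 0 < b) (hr : 0 ≤ r)
    (t : ℝ) :
    ∫⁻ s in Ioc 0 t, rlKernel a (t - s) * rlKernel b (s - r) = rlKernel (a + b) (t - r) := by
  have hsupp : Ioo r t ⊆ Ioc 0 t := fun s hs => ⟨hr.trans_lt hs.1, hs.2.le⟩
  rw [setLIntegral_eq_of_support_subset ((support_rlKernel_mul_rlKernel a b r t).trans hsupp),
    lintegral_rlKernel_mul_rlKernel ha hb]

theorem rlIntegral_rlKernel {a b : ℝ} (ha : 0 < a) (hb : 0 < b) (t : ℝ) :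
    rlIntegral a (rlKernel b) t = rlKernel (a + b) t := by
  simpa [rlIntegral] using setLIntegral_rlKernel_mul_rlKernel ha hb le_rfl t

theorem rlIntegral_eq_setLIntegral_Ioc {s t : ℝ} (hs : 0 ≤ s) (hst : s ≤ t) (c : ℝ)
    (f : ℝ → ℝ≥0∞) : rlIntegral c f s = ∫⁻ r in Ioc 0 t, rlKernel c (s - r) * f r := by
  have hzero : ∫⁻ r in Ioc s t, rlKernel c (s - r) * f r = 0 := by
    rw [setLIntegral_congr_fun measurableSet_Ioc (g := 0) fun r hr => by
      simp [rlKernel_of_nonpos (sub_nonpos.2 hr.1.le)]]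
    exact lintegral_zero
  rw [rlIntegral, ← Ioc_union_Ioc_eq_Ioc hs hst,
    lintegral_union measurableSet_Ioc (Ioc_disjoint_Ioc_of_le le_rfl), hzero, add_zero]

theorem rlIntegral_rlIntegral {a b t : ℝ} {f : ℝ → ℝ≥0∞} (ha : 0 < a) (hb : 0 < b)
    (hf : AEMeasurable f (volume.restrict (Ioc 0 t))) :
    rlIntegral a (rlIntegral b f) t = rlIntegral (a + b) f t := by
  calc rlIntegral a (rlIntegral b f) t
      = ∫⁻ s in Ioc 0 t, ∫⁻ r in Ioc 0 t, rlKernel a (t - s) * rlKernel b (s - r) * f r := by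
        rw [rlIntegral]
        refine setLIntegral_congr_fun measurableSet_Ioc fun s hs => ?_
        rw [rlIntegral_eq_setLIntegral_Ioc hs.1.le hs.2,
          ← lintegral_const_mul' _ _ (rlKernel_ne_top _ _)]
        simp_rw [mul_assoc]
    _ = ∫⁻ r in Ioc 0 t, ∫⁻ s in Ioc 0 t, rlKernel a (t - s) * rlKernel b (s - r) * f r :=
        lintegral_lintegral_swap <|
          (by fun_prop :
            Measurable fun p : ℝ × ℝ => rlKernel a (t - p.1) * rlKernel b (p.1 - p.2))
              |>.aemeasurable.mul hf.comp_snd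
    _ = rlIntegral (a + b) f t := by
        refine setLIntegral_congr_fun measurableSet_Ioc fun r hr => ?_
        rw [lintegral_mul_const _ (by fun_prop),
          setLIntegral_rlKernel_mul_rlKernel ha hb hr.1.le]

theorem rlIntegral_mono {c t : ℝ} {f g : ℝ → ℝ≥0∞} (h : ∀ s ∈ Ioc 0 t, f s ≤ g s) :
    rlIntegral c f t ≤ rlIntegral c g t :=
  setLIntegral_mono' measurableSet_Ioc fun s hs => mul_le_mul_right (h s hs) _

theorem rlIntegral_const_mul_add_const_mul {c t : ℝ} {f g : ℝ → ℝ≥0∞} (hf : Measurable f)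
    (C : ℝ≥0∞) {L : ℝ≥0∞} (hL : L ≠ ∞) :
    rlIntegral c (fun s => C * f s + L * g s) t =
      C * rlIntegral c f t + L * rlIntegral c g t := by
  simp only [rlIntegral, mul_add, mul_left_comm _ C, mul_left_comm _ L]
  rw [lintegral_add_left (by fun_prop), lintegral_const_mul _ (by fun_prop),
    lintegral_const_mul' _ _ hL]

theorem rlIntegral_le_rlKernel_mul_lintegral {c : ℝ} (hc : 1 ≤ c) (f : ℝ → ℝ≥0∞) (t : ℝ) :
    rlIntegral c f t ≤ rlKernel c t * ∫⁻ s in Ioc 0 t, f s := by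
  rw [← lintegral_const_mul' _ _ (rlKernel_ne_top c t)]
  exact setLIntegral_mono' measurableSet_Ioc fun s hs =>
    mul_le_mul_left (rlKernel_mono hc (by linarith [hs.1])) _

section Gronwall

variable {β t : ℝ} {C : ℝ≥0∞} {U : ℝ → ℝ≥0∞}

theorem rlIntegral_le_of_le_add_rlIntegral {c : ℝ} {L : ℝ≥0∞} (hc : 0 < c) (hβ : 0 < β)
    (hL : L ≠ ∞) (hU_meas : AEMeasurable U (volume.restrict (Ioc 0 t)))
    (hU : ∀ s ∈ Ioc 0 t, U s ≤ C + L * rlIntegral β U s) :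
    rlIntegral c U t ≤ C * rlKernel (c + 1) t + L * rlIntegral (c + β) U t :=
  calc rlIntegral c U t
      ≤ rlIntegral c (fun s => C * rlKernel 1 s + L * rlIntegral β U s) t :=
        rlIntegral_mono fun s hs => by simpa [rlKernel_one hs.1] using hU s hs
    _ = C * rlKernel (c + 1) t + L * rlIntegral (c + β) U t := by
        rw [rlIntegral_const_mul_add_const_mul (measurable_rlKernel 1) C hL,
          rlIntegral_rlKernel hc one_pos, rlIntegral_rlIntegral hc hβ hU_meas]

theorem le_sum_add_pow_mul_rlIntegral {L : ℝ≥0∞} (hβ : 0 < β) (ht : 0 < t) (hL : L ≠ ∞)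
    (hU_meas : AEMeasurable U (volume.restrict (Ioc 0 t)))
    (hU : ∀ s ∈ Ioc 0 t, U s ≤ C + L * rlIntegral β U s) (n : ℕ) :
    U t ≤ C * ∑ k ∈ Finset.range (n + 1), L ^ k * rlKernel (k * β + 1) t +
      L ^ (n + 1) * rlIntegral ((n + 1 : ℕ) * β) U t := by
  induction n with
  | zero => simpa [rlKernel_one ht] using hU t ⟨ht, le_rfl⟩
  | succ n ih =>
    have hstep := rlIntegral_le_of_le_add_rlIntegral (c := (n + 1 : ℕ) * β) (by positivity) hβ
      hL hU_meas hU
    calc U t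
        ≤ C * ∑ k ∈ Finset.range (n + 1), L ^ k * rlKernel (k * β + 1) t +
            L ^ (n + 1) * (C * rlKernel ((n + 1 : ℕ) * β + 1) t +
              L * rlIntegral ((n + 1 : ℕ) * β + β) U t) := by
          grw [ih, hstep]
      _ = _ := by
          rw [Finset.sum_range_succ (n := n + 1),
            show ((n + 1 + 1 : ℕ) : ℝ) * β = (n + 1 : ℕ) * β + β by push_cast; ring]
          ring

theorem ofReal_pow_mul_rlKernel {a : ℝ} (ha : 0 ≤ a) (ht : 0 < t) (k : ℕ) (c : ℝ) :
    ENNReal.ofReal a ^ k * rlKernel (k * β + c) t =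
      ENNReal.ofReal ((a * t ^ β) ^ k / Gamma (k * β + c) * t ^ (c - 1)) := by
  rw [rlKernel_of_pos ht, ← ENNReal.ofReal_pow ha, ← ENNReal.ofReal_mul (by positivity)]
  congr 1
  rw [mul_pow, ← rpow_natCast (t ^ β), ← rpow_mul ht.le,
    show k * β + c - 1 = β * k + (c - 1) by ring, rpow_add ht]
  ring

theorem tendsto_pow_mul_rlKernel {a : ℝ} (hβ : 0 < β) (ha : 0 ≤ a) (ht : 0 < t) :
    Tendsto (fun n : ℕ => ENNReal.ofReal a ^ n * rlKernel (n * β) t) atTop (𝓝 0) := by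
  have h := ENNReal.tendsto_ofReal <|
    (summable_pow_div_Gamma_mul_add hβ (a * t ^ β) 0).tendsto_atTop_zero.mul_const
      (t ^ (0 - 1 : ℝ))
  have hterm (n : ℕ) : ENNReal.ofReal a ^ n * rlKernel (n * β) t =
      ENNReal.ofReal ((a * t ^ β) ^ n / Gamma (n * β + 0) * t ^ (0 - 1 : ℝ)) := by
    rw [← ofReal_pow_mul_rlKernel ha ht, add_zero]
  simpa [hterm] using h

theorem tsum_pow_mul_rlKernel {a : ℝ} (hβ : 0 < β) (ha : 0 ≤ a) (ht : 0 < t) :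
    ∑' k : ℕ, ENNReal.ofReal a ^ k * rlKernel (k * β + 1) t =
      ENNReal.ofReal (mittagLeffler β (a * t ^ β)) := by
  simp_rw [ofReal_pow_mul_rlKernel ha ht, sub_self, rpow_zero, mul_one]
  rw [mittagLeffler, ENNReal.ofReal_tsum_of_nonneg (fun k => by positivity)
    (summable_pow_div_Gamma_mul_add hβ _ 1)]

theorem le_mul_mittagLeffler_of_le_add_rlIntegral {a : ℝ} (hβ : 0 < β) (ha : 0 ≤ a)
    (ht : 0 < t)
    (hU_meas : AEMeasurable U (volume.restrict (Ioc 0 t)))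
    (hU_fin : ∫⁻ s in Ioc 0 t, U s ≠ ∞)
    (hU : ∀ s ∈ Ioc 0 t, U s ≤ C + ENNReal.ofReal a * rlIntegral β U s) :
    U t ≤ C * ENNReal.ofReal (mittagLeffler β (a * t ^ β)) := by
  rw [← tsum_pow_mul_rlKernel hβ ha ht]
  have hlarge : ∀ᶠ n : ℕ in atTop, 1 ≤ ((n + 1 : ℕ) : ℝ) * β :=
    ((tendsto_natCast_atTop_atTop.comp (tendsto_add_atTop_nat 1)).atTop_mul_const hβ)
      |>.eventually_ge_atTop 1
  have hbound : ∀ᶠ n : ℕ in atTop,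
      U t ≤ C * ∑' k : ℕ, ENNReal.ofReal a ^ k * rlKernel (k * β + 1) t +
        ENNReal.ofReal a ^ (n + 1) * rlKernel ((n + 1 : ℕ) * β) t * ∫⁻ s in Ioc 0 t, U s := by
    filter_upwards [hlarge] with n hn
    grw [le_sum_add_pow_mul_rlIntegral hβ ht ENNReal.ofReal_ne_top hU_meas hU n,
      ENNReal.sum_le_tsum, rlIntegral_le_rlKernel_mul_lintegral hn, mul_assoc]
  have hrem := ENNReal.Tendsto.mul_const
    ((tendsto_pow_mul_rlKernel hβ ha ht).comp (tendsto_add_atTop_nat 1)) (Or.inr hU_fin)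
  simpa using ge_of_tendsto (tendsto_const_nhds.add hrem) hbound

end Gronwall

theorem ofReal_intervalIntegral_le_rlIntegral {β s : ℝ} (hβ : 0 < β) (hs : 0 ≤ s)
    (u : ℝ → ℝ) :
    ENNReal.ofReal (∫ r in (0:ℝ)..s, (s - r) ^ (β - 1) * u r) ≤
      ENNReal.ofReal (Gamma β) * rlIntegral β (fun r => ENNReal.ofReal (u r)) s := by
  have hΓ := Gamma_pos_of_pos hβ
  rw [intervalIntegral.integral_of_le hs, integral_Ioc_eq_integral_Ioo, rlIntegral,
    ← lintegral_const_mul' _ _ ENNReal.ofReal_ne_top]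
  calc ENNReal.ofReal (∫ r in Ioo 0 s, (s - r) ^ (β - 1) * u r)
      ≤ ∫⁻ r in Ioo 0 s, ENNReal.ofReal ((s - r) ^ (β - 1) * u r) :=
        ofReal_integral_le_lintegral_ofReal _
    _ = ∫⁻ r in Ioo 0 s,
          ENNReal.ofReal (Gamma β) * (rlKernel β (s - r) * ENNReal.ofReal (u r)) := by
        refine setLIntegral_congr_fun measurableSet_Ioo fun r hr => ?_
        have hsr : 0 < s - r := sub_pos.2 hr.2
        rw [rlKernel_of_pos hsr, ← mul_assoc, ← ENNReal.ofReal_mul hΓ.le,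
          mul_div_cancel₀ _ hΓ.ne', ENNReal.ofReal_mul (by positivity)]
    _ ≤ _ := lintegral_mono_set Ioo_subset_Ioc_self

theorem ofReal_le_add_rlIntegral {β C g s : ℝ} {u : ℝ → ℝ} (hβ : 0 < β) (hg : 0 ≤ g)
    (hs : 0 ≤ s) (h : u s ≤ C + g * ∫ r in (0:ℝ)..s, (s - r) ^ (β - 1) * u r) :
    ENNReal.ofReal (u s) ≤
      ENNReal.ofReal C + ENNReal.ofReal (g * Gamma β) *
        rlIntegral β (fun r => ENNReal.ofReal (u r)) s := by
  grw [h, ENNReal.ofReal_add_le, ENNReal.ofReal_mul hg,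
    ofReal_intervalIntegral_le_rlIntegral hβ hs u, ENNReal.ofReal_mul hg, mul_assoc]

theorem generalized_gronwall_const_general (T β C g : ℝ) (u : ℝ → ℝ)
    (hβ : 0 < β) (hC : 0 ≤ C) (hg : 0 ≤ g)
    (hu_int : ∀ t ∈ Set.Ico (0:ℝ) T, IntegrableOn u (Set.Icc 0 t))
    (hu : ∀ t ∈ Set.Ico (0:ℝ) T,
      u t ≤ C + g * ∫ s in (0:ℝ)..t, (t - s) ^ (β - 1) * u s) :
    ∀ t ∈ Set.Ico (0:ℝ) T,
      u t ≤ C * mittagLeffler β (g * Real.Gamma β * t ^ β) := by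
  rintro t ⟨ht0, htT⟩
  rcases ht0.eq_or_lt with rfl | ht
  · simpa [zero_rpow hβ.ne', mittagLeffler_zero] using hu 0 ⟨le_rfl, htT⟩
  have ha : 0 ≤ g * Gamma β := mul_nonneg hg (Gamma_pos_of_pos hβ).le
  have hint : IntegrableOn u (Ioc 0 t) := (hu_int t ⟨ht0, htT⟩).mono_set Ioc_subset_Icc_self
  have key := le_mul_mittagLeffler_of_le_add_rlIntegral hβ ha ht
    hint.aemeasurable.ennreal_ofReal hint.lintegral_lt_top.ne
    fun s hs => ofReal_le_add_rlIntegral hβ hg hs.1.le (hu s ⟨hs.1.le, hs.2.trans_lt htT⟩)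
  rw [← ENNReal.ofReal_mul hC] at key
  exact (ENNReal.ofReal_le_ofReal_iff
    (mul_nonneg hC (mittagLeffler_nonneg hβ.le (by positivity)))).1 key

/-- Generalized Gronwall inequality, constant case. -/
theorem generalized_gronwall_const (T β C g : ℝ) (u : ℝ → ℝ)
    (hβ : 0 < β) (hT : 0 < T) (hC : 0 ≤ C) (hg : 0 ≤ g)
    (hu_nonneg : ∀ t ∈ Set.Ico (0:ℝ) T, 0 ≤ u t)
    (hu_int : ∀ t ∈ Set.Ico (0:ℝ) T, IntegrableOn u (Set.Icc 0 t))
    (hu : ∀ t ∈ Set.Ico (0:ℝ) T,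
      u t ≤ C + g * ∫ s in (0:ℝ)..t, (t - s) ^ (β - 1) * u s) :
    ∀ t ∈ Set.Ico (0:ℝ) T,
      u t ≤ C * mittagLeffler β (g * Real.Gamma β * t ^ β) :=
  generalized_gronwall_const_general T β C g u hβ hC hg hu_int hu
end
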